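/- Define Δ on permutations of [n] by Δ(π) = Ψ⁻¹((Ψ(π))⁻¹), i.e. Δ(π) is the unique permutation with Ψ(Δ(π)) equal to the group inverse of the permutation Ψ(π). Then Δ is an involution on the set of permutations of [n]; for every π, cyc(Δ(π)) = cyc(π); and the number of cyclic occurrences of the classical pattern 3–1–2 in π equals the number of cyclic occurrences of the classical pattern 2–3–1 in Δ(π). -/

import Mathlib

open scoped Classical

noncomputable section

/-- `x` is the minimal element of its cycle under `π`. -/
def isCycMin {n : ℕ} (π : Equiv.Perm (Fin n)) (x : Fin n) : Prop :=
  ∀ y : Fin n, π.SameCycle x y → x ≤ y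

/-- The minimal elements of the cycles of `π`, listed in decreasing order. -/
def cycMins {n : ℕ} (π : Equiv.Perm (Fin n)) : List (Fin n) :=
  ((List.finRange n).filter fun x => decide (isCycMin π x)).reverse

/-- The number of elements in the cycle of `x` under `π` (a fixed point has cycle length 1). -/
def cycLen {n : ℕ} (π : Equiv.Perm (Fin n)) (x : Fin n) : ℕ :=
  Nat.card {y : Fin n // π.SameCycle x y}

/-- The cycle of `x` under `π`, written as the list `x, π x, π² x, …`. -/
def seg {n : ℕ} (π : Equiv.Perm (Fin n)) (x : Fin n) : List (Fin n) :=
  (List.range (cycLen π x)).map fun j => (π ^ j) x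

/-- `Ψ(π)`: the word obtained by erasing the parentheses from the standard cycle form of `π`
(each cycle starts with its smallest element; cycles are in decreasing order of their minima). -/
def psiList {n : ℕ} (π : Equiv.Perm (Fin n)) : List (Fin n) :=
  (cycMins π).foldr (fun m acc => seg π m ++ acc) []

/-- The word `Ψ(π)` as a function `ℕ → ℕ` (positions and values both 0-indexed). -/
def wordN {n : ℕ} (π : Equiv.Perm (Fin n)) (i : ℕ) : ℕ :=
  ((psiList π).map fun x => (x : ℕ)).getD i 0

/-- Positions `i` and `j` of the word `Ψ(π)` hold elements lying in the same cycle of `π`. -/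
def sameCycleAt {n : ℕ} (π : Equiv.Perm (Fin n)) (i j : ℕ) : Prop :=
  ∃ a b : Fin n, (psiList π)[i]? = some a ∧ (psiList π)[j]? = some b ∧ π.SameCycle a b

/-- The number of cycles of `π`, fixed points included. -/
def cyc {n : ℕ} (π : Equiv.Perm (Fin n)) : ℕ :=
  Nat.card {x : Fin n // isCycMin π x}

/-- The number of occurrences of the length-3 pattern described by `P` at triples of
positions `i < j < k` (all `< n`) in the word `w`. -/
def occ3 (n : ℕ) (w : ℕ → ℕ) (P : ℕ → ℕ → ℕ → Prop) : ℕ :=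
  Nat.card {t : ℕ × ℕ × ℕ //
    t.1 < t.2.1 ∧ t.2.1 < t.2.2 ∧ t.2.2 < n ∧ P (w t.1) (w t.2.1) (w t.2.2)}

/-- `Ψ(π)` as a function `Fin n → Fin n` (0-indexed positions). -/
def psiFun {n : ℕ} (π : Equiv.Perm (Fin n)) : Fin n → Fin n :=
  fun i => (psiList π).getD (i : ℕ) i

/-!
Write `Ψ(π)` as the concatenation of the cycles `seg π m`, one for each cycle minimum `m`, in
decreasing order of `m`. Each block starts with its minimum and the next block starts with a
smaller element, so the blocks are recovered from the word as maximal runs of elements above their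
first one; read as a cycle, each block gives back `π` on it. Hence `Ψ` is injective, so it is a
bijection of `S_n` and `Δ` is well defined. The block heads are exactly the left-to-right minima of
`Ψ(π)`, so `cyc π` counts them, and `i` is a left-to-right minimum of a permutation `w` iff `w i`
is one of `w⁻¹`. Finally, positions `i < j < k` with `w j < w k < w i` become positions
`w j < w k < w i` of `w⁻¹` carrying the values `j, k, i`: a 3-1-2 occurrence of `w` is a 2-3-1
occurrence of `w⁻¹`.
-/

def IsStandardCycleForm {α : Type*} [Preorder α] (ms : List α) (f : α → List α) : Prop :=
  ms.Pairwise (· > ·) ∧ ∀ m ∈ ms, (f m).head? = some m ∧ ∀ x ∈ f m, m ≤ x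

namespace IsStandardCycleForm

variable {α : Type*} [Preorder α] {m : α} {ms : List α} {f : α → List α}

theorem of_cons (h : IsStandardCycleForm (m :: ms) f) : IsStandardCycleForm ms f :=
  ⟨(List.pairwise_cons.1 h.1).2, fun m' hm' => h.2 m' (List.mem_cons_of_mem _ hm')⟩

theorem exists_eq_cons (h : IsStandardCycleForm (m :: ms) f) : ∃ t, f m = m :: t :=
  List.head?_eq_some_iff.1 (h.2 m List.mem_cons_self).1

theorem le_of_mem (h : IsStandardCycleForm (m :: ms) f) {x : α} (hx : x ∈ f m) : m ≤ x :=
  (h.2 m List.mem_cons_self).2 x hx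

theorem lt_of_mem_tail (h : IsStandardCycleForm (m :: ms) f) {m' : α} (hm' : m' ∈ ms) :
    m' < m :=
  List.rel_of_pairwise_cons h.1 hm'

theorem takeWhile_flatMap (h : IsStandardCycleForm (m :: ms) f) :
    ((m :: ms).flatMap f).takeWhile (fun x => decide (m ≤ x)) = f m := by
  rw [List.flatMap_cons, List.takeWhile_append_of_pos (by simpa using fun x => h.le_of_mem)]
  cases ms with
  | nil => simp
  | cons m' ms' =>
    obtain ⟨t, ht⟩ := h.of_cons.exists_eq_cons
    have : ¬ m ≤ m' := not_le_of_gt (h.lt_of_mem_tail List.mem_cons_self)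
    simp [ht, this]

theorem map_eq_of_flatMap_eq {ms' : List α} {g : α → List α} (hf : IsStandardCycleForm ms f)
    (hg : IsStandardCycleForm ms' g) (h : ms.flatMap f = ms'.flatMap g) :
    ms.map f = ms'.map g := by
  induction ms generalizing ms' with
  | nil =>
    cases ms' with
    | nil => rfl
    | cons m' _ => obtain ⟨t, ht⟩ := hg.exists_eq_cons; simp [ht] at h
  | cons m ms ih =>
    cases ms' with
    | nil => obtain ⟨t, ht⟩ := hf.exists_eq_cons; simp [ht] at h
    | cons m' ms' =>
      obtain ⟨t, ht⟩ := hf.exists_eq_cons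
      obtain ⟨t', ht'⟩ := hg.exists_eq_cons
      have hmm' : m = m' := by simpa [ht, ht'] using congrArg List.head? h
      subst hmm'
      have hfg : f m = g m := by rw [← hf.takeWhile_flatMap, ← hg.takeWhile_flatMap, h]
      rw [List.flatMap_cons, List.flatMap_cons, hfg, List.append_cancel_left_eq] at h
      rw [List.map_cons, List.map_cons, hfg, ih hf.of_cons hg.of_cons h]

theorem forall_lt_iff_mem (hf : IsStandardCycleForm ms f) (hnd : (ms.flatMap f).Nodup)
    {pre suf : List α} {x : α} (h : ms.flatMap f = pre ++ x :: suf) :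
    (∀ y ∈ pre, x < y) ↔ x ∈ ms := by
  induction ms generalizing pre with
  | nil => simp at h
  | cons m ms ih =>
    obtain ⟨t, ht⟩ := hf.exists_eq_cons
    rw [List.flatMap_cons] at h hnd
    obtain ⟨hnd_m, hnd_ms, hdisj⟩ := List.nodup_append.1 hnd
    have in_tail : ∀ a, pre = f m ++ a → ms.flatMap f = a ++ x :: suf →
        ((∀ y ∈ pre, x < y) ↔ x ∈ m :: ms) := by
      rintro a rfl hR
      have hxm : x ≠ m := (hdisj m (by simp [ht]) x (by simp [hR])).symm
      rw [List.forall_mem_append, ih hf.of_cons hnd_ms hR, List.mem_cons]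
      simp only [hxm, false_or]
      exact ⟨And.right, fun hx =>
        ⟨fun y hy => (hf.lt_of_mem_tail hx).trans_le (hf.le_of_mem hy), hx⟩⟩
    rcases List.append_eq_append_iff.1 h with ⟨a, hpre, hR⟩ | ⟨_ | ⟨x', b⟩, hfm, hsuf⟩
    · exact in_tail a hpre hR
    · exact in_tail [] (by simpa using hfm.symm) (by simpa using hsuf.symm)
    · obtain ⟨rfl, rfl⟩ := List.cons_eq_cons.1 hsuf
      rw [ht] at hfm hnd_m
      cases pre with
      | nil =>
        obtain ⟨rfl, -⟩ := List.cons_eq_cons.1 hfm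
        simp
      | cons y pre =>
        obtain ⟨rfl, rfl⟩ := List.cons_eq_cons.1 hfm
        have hmx : m ≤ x := hf.le_of_mem (by simp [ht])
        have hxm : x ≠ m := by rintro rfl; simp at hnd_m
        simp only [List.mem_cons, hxm, false_or]
        exact ⟨fun h => absurd hmx (not_le_of_gt (h m (.inl rfl))),
          fun hx => absurd hmx (not_le_of_gt (hf.lt_of_mem_tail hx))⟩

end IsStandardCycleForm

section LeftToRightMin

variable {α β : Type*}

def IsLeftToRightMin [LT α] [LT β] (w : α → β) (i : α) : Prop :=
  ∀ j < i, w i < w j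

theorem Equiv.isLeftToRightMin_symm_apply_iff [LinearOrder α] [LinearOrder β] (e : α ≃ β)
    (i : α) : IsLeftToRightMin e.symm (e i) ↔ IsLeftToRightMin e i := by
  rw [IsLeftToRightMin, e.symm.forall_congr_left]
  simp only [Equiv.symm_symm, Equiv.symm_apply_apply, IsLeftToRightMin]
  constructor
  · intro h j hji
    by_contra! hle
    exact (h j (hle.lt_of_ne (e.injective.ne hji.ne))).not_gt hji
  · intro h j hji
    by_contra! hle
    exact (h j (hle.lt_of_ne fun hij => hji.ne (congrArg e hij))).not_gt hji

end LeftToRightMin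

theorem occ3_231_eq_occ3_312 {n : ℕ} {v w : ℕ → ℕ} (hv : ∀ i < n, v i < n)
    (hw : ∀ i < n, w i < n) (hvw : ∀ i < n, v (w i) = i) (hwv : ∀ i < n, w (v i) = i) :
    occ3 n v (fun a b c => c < a ∧ a < b) = occ3 n w (fun a b c => b < c ∧ c < a) := by
  refine Nat.card_congr
    ⟨fun t => ⟨(v t.1.2.2, v t.1.1, v t.1.2.1), ?_⟩,
      fun t => ⟨(w t.1.2.1, w t.1.2.2, w t.1.1), ?_⟩, fun t => ?_, fun t => ?_⟩
  all_goals
    obtain ⟨⟨p, q, r⟩, hpq, hqr, hr, h₁, h₂⟩ := t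
    dsimp only at hpq hqr hr h₁ h₂ ⊢
  · rw [hwv p (by omega), hwv q (by omega), hwv r hr]
    exact ⟨h₁, h₂, hv q (by omega), hpq, hqr⟩
  · rw [hvw p (by omega), hvw q (by omega), hvw r hr]
    exact ⟨h₁, h₂, hw p (by omega), hpq, hqr⟩
  · simp only [Subtype.mk.injEq, Prod.mk.injEq]
    exact ⟨hwv p (by omega), hwv q (by omega), hwv r hr⟩
  · simp only [Subtype.mk.injEq, Prod.mk.injEq]
    exact ⟨hvw p (by omega), hvw q (by omega), hvw r hr⟩

section Cycles

variable {n : ℕ} (π : Equiv.Perm (Fin n))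

theorem cycLen_pos (x : Fin n) : 0 < cycLen π x :=
  Nat.card_pos_iff.2 ⟨⟨⟨x, .refl _ _⟩⟩, inferInstance⟩

theorem seg_of_apply_eq {x : Fin n} (hx : π x = x) : seg π x = [x] := by
  have : cycLen π x = 1 := by
    rw [cycLen, Nat.card_congr (Equiv.subtypeEquivRight fun y =>
      ⟨fun h => (h.eq_of_left hx).symm, fun h => h ▸ .refl _ _⟩)]
    simp
  simp [seg, this]

theorem seg_of_apply_ne {x : Fin n} (hx : π x ≠ x) : seg π x = π.toList x := by
  have : cycLen π x = (π.cycleOf x).support.card := by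
    rw [cycLen, ← Nat.card_eq_finsetCard]
    exact Nat.card_congr (Equiv.subtypeEquivRight fun y => by
      rw [Equiv.Perm.mem_support_cycleOf_iff, Equiv.Perm.mem_support, and_iff_left hx])
  rw [seg, Equiv.Perm.toList, this, ← List.range_map_iterate]
  simp [Equiv.Perm.coe_pow]

theorem head?_seg (x : Fin n) : (seg π x).head? = some x := by
  simp [seg, List.head?_range, (cycLen_pos π x).ne']

theorem mem_seg {x y : Fin n} : y ∈ seg π x ↔ π.SameCycle x y := by
  by_cases hx : π x = x
  · rw [seg_of_apply_eq π hx, List.mem_singleton]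
    exact ⟨fun h => h ▸ .refl _ _, fun h => (h.eq_of_left hx).symm⟩
  · simp [seg_of_apply_ne π hx, Equiv.Perm.mem_toList_iff, hx]

theorem nodup_seg (x : Fin n) : (seg π x).Nodup := by
  by_cases hx : π x = x
  · simp [seg_of_apply_eq π hx]
  · simpa [seg_of_apply_ne π hx] using π.nodup_toList x

theorem formPerm_seg (x : Fin n) : (seg π x).formPerm = π.cycleOf x := by
  by_cases hx : π x = x
  · rw [seg_of_apply_eq π hx, List.formPerm_singleton, (π.cycleOf_eq_one_iff).2 hx]
  · rw [seg_of_apply_ne π hx, Equiv.Perm.formPerm_toList]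

theorem apply_eq_formPerm_seg {m y : Fin n} (hy : y ∈ seg π m) :
    π y = (seg π m).formPerm y := by
  rw [formPerm_seg, ((mem_seg π).1 hy).cycleOf_apply]

end Cycles

section Psi

variable {n : ℕ} (π : Equiv.Perm (Fin n))

theorem mem_cycMins {m : Fin n} : m ∈ cycMins π ↔ isCycMin π m := by
  simp [cycMins]

theorem psiList_eq_flatMap : psiList π = (cycMins π).flatMap (seg π) := by
  simp [psiList, List.flatMap]

theorem isStandardCycleForm_cycMins : IsStandardCycleForm (cycMins π) (seg π) :=
  ⟨by rw [cycMins, List.pairwise_reverse]; exact (List.pairwise_lt_finRange n).filter _,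
    fun m hm => ⟨head?_seg π m, fun x hx => (mem_cycMins π).1 hm x ((mem_seg π).1 hx)⟩⟩

theorem exists_isCycMin_sameCycle (y : Fin n) : ∃ m, isCycMin π m ∧ π.SameCycle m y := by
  obtain ⟨m, hm, hmin⟩ :=
    (Finset.univ.filter (π.SameCycle · y)).exists_min_image id
      ⟨y, by simp [Equiv.Perm.SameCycle.refl]⟩
  simp only [Finset.mem_filter, Finset.mem_univ, true_and, id] at hm hmin
  exact ⟨m, fun z hz => hmin z (hz.symm.trans hm), hm⟩

theorem mem_psiList (y : Fin n) : y ∈ psiList π := by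
  obtain ⟨m, hm, hmy⟩ := exists_isCycMin_sameCycle π y
  rw [psiList_eq_flatMap, List.mem_flatMap]
  exact ⟨m, (mem_cycMins π).2 hm, (mem_seg π).2 hmy⟩

theorem nodup_psiList : (psiList π).Nodup := by
  rw [psiList_eq_flatMap, List.nodup_flatMap]
  refine ⟨fun m _ => nodup_seg π m, (isStandardCycleForm_cycMins π).1.imp_of_mem ?_⟩
  intro m m' hm hm' hlt y hy hy'
  rw [mem_seg] at hy hy'
  exact hlt.ne' (le_antisymm ((mem_cycMins π).1 hm _ (hy.trans hy'.symm))
    ((mem_cycMins π).1 hm' _ (hy'.trans hy.symm)))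

theorem length_psiList : (psiList π).length = n := by
  have : (psiList π).toFinset = Finset.univ :=
    Finset.eq_univ_of_forall fun y => List.mem_toFinset.2 (mem_psiList π y)
  rw [← List.toFinset_card_of_nodup (nodup_psiList π), this, Finset.card_univ, Fintype.card_fin]

theorem psiFun_eq_getElem (i : Fin n) :
    psiFun π i = (psiList π)[(i : ℕ)]'(by rw [length_psiList]; exact i.2) :=
  List.getD_eq_getElem ..

theorem psiFun_injective : Function.Injective (psiFun π) := by
  intro i j h
  rw [psiFun_eq_getElem, psiFun_eq_getElem, (nodup_psiList π).getElem_inj_iff] at h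
  exact Fin.ext h

def psiPerm : Equiv.Perm (Fin n) :=
  Equiv.ofBijective (psiFun π) (psiFun_injective π).bijective_of_finite

@[simp] theorem coe_psiPerm : ⇑(psiPerm π) = psiFun π := rfl

theorem psiList_injective : Function.Injective (psiList (n := n)) := by
  intro π σ h
  rw [psiList_eq_flatMap, psiList_eq_flatMap] at h
  have hsegs := (isStandardCycleForm_cycMins π).map_eq_of_flatMap_eq
    (isStandardCycleForm_cycMins σ) h
  ext y
  obtain ⟨m, hm, hy⟩ := List.mem_flatMap.1 (psiList_eq_flatMap π ▸ mem_psiList π y)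
  obtain ⟨m', -, hseg⟩ := List.mem_map.1 (hsegs ▸ List.mem_map_of_mem hm)
  rw [apply_eq_formPerm_seg π hy, apply_eq_formPerm_seg σ (hseg ▸ hy), hseg]

theorem psiPerm_injective : Function.Injective (psiPerm (n := n)) := by
  intro π σ h
  refine psiList_injective (List.ext_getElem (by simp [length_psiList]) fun i hi hi' => ?_)
  have := DFunLike.congr_fun h ⟨i, by rwa [length_psiList] at hi⟩
  simpa [psiFun_eq_getElem] using this

theorem psiPerm_bijective : Function.Bijective (psiPerm (n := n)) :=
  psiPerm_injective.bijective_of_finite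

theorem isLeftToRightMin_psiPerm_iff (i : Fin n) :
    IsLeftToRightMin (psiPerm π) i ↔ isCycMin π (psiPerm π i) := by
  have hi : (i : ℕ) < (psiList π).length := by rw [length_psiList]; exact i.2
  have hsplit :
      psiList π = (psiList π).take i ++ (psiList π)[(i : ℕ)] :: (psiList π).drop (i + 1) := by
    rw [← List.drop_eq_getElem_cons, List.take_append_drop]
  simp only [coe_psiPerm, psiFun_eq_getElem]
  rw [← mem_cycMins, ← (isStandardCycleForm_cycMins π).forall_lt_iff_mem
    (psiList_eq_flatMap π ▸ nodup_psiList π) ((psiList_eq_flatMap π).symm.trans hsplit)]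
  simp only [IsLeftToRightMin, psiFun_eq_getElem, List.mem_take_iff_getElem]
  have hlen := length_psiList π
  refine ⟨fun h y ⟨j, hj, hy⟩ =>
      hy ▸ h ⟨j, by omega⟩ (Fin.lt_def.2 (hj.trans_le (min_le_left _ _))),
    fun h j hj => h _ ⟨j, lt_min hj (hlen.symm ▸ j.2), rfl⟩⟩

theorem cyc_eq_card_isLeftToRightMin :
    cyc π = Nat.card {i // IsLeftToRightMin (psiPerm π) i} :=
  Nat.card_congr ((psiPerm π).subtypeEquiv (isLeftToRightMin_psiPerm_iff π)).symm

-- The coercion `List (Fin n) → List ℕ` in `wordN` elaborates to a monadic bind.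
theorem wordN_eq_psiPerm {i : ℕ} (hi : i < n) : wordN π i = psiPerm π ⟨i, hi⟩ := by
  simp [wordN, ← List.map_eq_flatMap, psiFun_eq_getElem, length_psiList, hi]

theorem wordN_lt {i : ℕ} (hi : i < n) : wordN π i < n := by
  rw [wordN_eq_psiPerm π hi]
  exact Fin.isLt _

variable {π} {δ : Equiv.Perm (Fin n)}

theorem wordN_wordN (h : ∀ i, psiFun δ (psiFun π i) = i) {i : ℕ} (hi : i < n) :
    wordN δ (wordN π i) = i := by
  rw [wordN_eq_psiPerm π hi, wordN_eq_psiPerm δ (Fin.isLt _)]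
  simp [h]

theorem psiFun_inverse_iff :
    ((∀ i, psiFun δ (psiFun π i) = i) ∧ (∀ i, psiFun π (psiFun δ i) = i)) ↔
      psiPerm δ = (psiPerm π)⁻¹ := by
  constructor
  · rintro ⟨h, -⟩
    rw [eq_inv_iff_mul_eq_one]
    ext i
    simp [h]
  · intro h
    simp [← coe_psiPerm, h]

theorem cyc_eq_of_psiPerm_eq_inv (h : psiPerm δ = (psiPerm π)⁻¹) : cyc δ = cyc π := by
  rw [cyc_eq_card_isLeftToRightMin, cyc_eq_card_isLeftToRightMin, h, Equiv.Perm.inv_def]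
  exact Nat.card_congr ((psiPerm π).subtypeEquiv fun i =>
    ((psiPerm π).isLeftToRightMin_symm_apply_iff i).symm).symm

end Psi

/-- `Δ(π) = Ψ⁻¹((Ψ(π))⁻¹)` is a well-defined involution on permutations of `[n]`
(here `δ = Δ(π)` is characterized by `Ψ(δ)` being the two-sided inverse function of
`Ψ(π)`); it preserves the number of cycles, and the number of cyclic occurrences of the
classical pattern 3-1-2 in `π` equals the number of cyclic occurrences of the classical
pattern 2-3-1 in `Δ(π)`. -/
theorem delta_involution (n : ℕ) :
    (∀ π : Equiv.Perm (Fin n), ∃! δ : Equiv.Perm (Fin n),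
        (∀ i : Fin n, psiFun δ (psiFun π i) = i) ∧
        (∀ i : Fin n, psiFun π (psiFun δ i) = i)) ∧
    (∀ π δ : Equiv.Perm (Fin n),
        ((∀ i : Fin n, psiFun δ (psiFun π i) = i) ∧
         (∀ i : Fin n, psiFun π (psiFun δ i) = i)) →
        ((∀ i : Fin n, psiFun π (psiFun δ i) = i) ∧
         (∀ i : Fin n, psiFun δ (psiFun π i) = i)) ∧
        cyc δ = cyc π ∧
        occ3 n (wordN δ) (fun a b c => c < a ∧ a < b)
          = occ3 n (wordN π) (fun a b c => b < c ∧ c < a)) := by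
  refine ⟨fun π => ?_, fun π δ h => ⟨h.symm, ?_, ?_⟩⟩
  · simpa only [psiFun_inverse_iff] using psiPerm_bijective.existsUnique (psiPerm π)⁻¹
  · exact cyc_eq_of_psiPerm_eq_inv (psiFun_inverse_iff.1 h)
  · exact occ3_231_eq_occ3_312 (fun _ => wordN_lt δ) (fun _ => wordN_lt π)
      (fun _ => wordN_wordN h.1) (fun _ => wordN_wordN h.2)
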